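/- arXiv:1201.3483 — 5 statements merged into one kernel-verified Lean document; each statement's English description precedes it below -/
import Mathlib

section
/- For nonnegative integers n, a, b with a ≥ b and a - b ≥ 0, the alternating sum ∑_{k=0}^{n} (n choose k) (-1)^k (a+k)!/(b+k)! equals (-1)^n (a-b)! a! / ((a-b-n)! (b+n)!), where the right-hand side is interpreted as 0 when a - b - n < 0. -/
/-!
The sum is `(-1)^n` times the `n`-th forward difference at `0` of `f_b k = (a + k)! / (b + k)!`.
One difference step gives `Δ f_b = (a - b) • f_(b+1)`, so `n` steps give
`Δ^n f_b = (a - b)(a - b - 1)⋯(a - b - n + 1) • f_(b+n)`. This falling factorial of `a - b`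
equals `(a - b)! / (a - b - n)!` for `n ≤ a - b` and vanishes for `n > a - b`.
-/

open Finset Nat Polynomial fwdDiff

variable {K : Type*} [Field K] [CharZero K]

theorem sum_choose_mul_neg_one_pow_mul_eq_fwdDiff_iter {R : Type*} [CommRing R]
    (f : ℕ → R) (n : ℕ) :
    ∑ k ∈ range (n + 1), (n.choose k : R) * (-1) ^ k * f k = (-1) ^ n * (Δ_[1])^[n] f 0 := by
  rw [fwdDiff_iter_eq_sum_shift, mul_sum]
  refine sum_congr rfl fun k hk => ?_
  obtain ⟨j, rfl⟩ := Nat.exists_eq_add_of_le (Nat.lt_succ_iff.mp (mem_range.mp hk))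
  have hsign : (-1 : R) ^ (k + j) * (-1) ^ j = (-1) ^ k := by
    rw [pow_add, mul_assoc, ← pow_add, Even.neg_one_pow ⟨j, rfl⟩, mul_one]
  rw [Nat.add_sub_cancel_left, zsmul_eq_mul, zero_add, smul_eq_mul, mul_one, ← hsign]
  push_cast
  ring

theorem fwdDiff_factorial_div_factorial (a b : ℕ) :
    Δ_[1] (fun k : ℕ => ((a + k)! : K) / (b + k)!) =
      ((a : K) - b) • fun k : ℕ => ((a + k)! : K) / (b + 1 + k)! := by
  funext k
  rw [fwdDiff, Pi.smul_apply, smul_eq_mul, ← add_assoc, ← add_assoc, add_right_comm b 1 k,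
    factorial_succ (a + k), factorial_succ (b + k)]
  have hb : ((b + k)! : K) ≠ 0 := cast_ne_zero.mpr (factorial_ne_zero _)
  have hb' : ((b + k + 1 : ℕ) : K) ≠ 0 := cast_ne_zero.mpr (succ_ne_zero _)
  push_cast at hb' ⊢
  field_simp
  ring

theorem fwdDiff_iter_factorial_div_factorial (n a b : ℕ) :
    (Δ_[1])^[n] (fun k : ℕ => ((a + k)! : K) / (b + k)!) =
      (descPochhammer K n).eval ((a : K) - b) • fun k : ℕ => ((a + k)! : K) / (b + n + k)! := by
  induction n generalizing b with
  | zero => simp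
  | succ n ih =>
    rw [Function.iterate_succ_apply, fwdDiff_factorial_div_factorial, fwdDiff_iter_const_smul,
      ih, smul_smul, descPochhammer_succ_left, eval_mul, eval_comp, eval_sub, eval_X, eval_one,
      add_right_comm b 1 n, add_assoc b n 1]
    push_cast
    ring_nf

theorem cast_descFactorial_eq_ite (d n : ℕ) :
    (d.descFactorial n : K) = if n ≤ d then (d ! : K) / (d - n)! else 0 := by
  split_ifs with h
  · rw [← factorial_mul_descFactorial h]
    push_cast
    rw [mul_div_cancel_left₀ _ (cast_ne_zero.mpr (factorial_ne_zero _))]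
  · rw [descFactorial_eq_zero_iff_lt.mpr (not_le.mp h), cast_zero]

/-- Alternating factorial-ratio sum identity: for `b ≤ a`,
`∑_{k=0}^n C(n,k) (-1)^k (a+k)!/(b+k)! = (-1)^n (a-b)! a! / ((a-b-n)! (b+n)!)`,
the right-hand side being `0` when `n > a - b` (Gamma-function convention). -/
theorem alternating_factorial_sum (n a b : ℕ) (hba : b ≤ a) :
    ∑ k ∈ range (n + 1),
      (n.choose k : ℝ) * (-1) ^ k * (factorial (a + k) : ℝ) / (factorial (b + k) : ℝ) =
    if n ≤ a - b then
      (-1 : ℝ) ^ n * (factorial (a - b) : ℝ) * (factorial a : ℝ) /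
        ((factorial (a - b - n) : ℝ) * (factorial (b + n) : ℝ))
    else 0 := by
  calc ∑ k ∈ range (n + 1),
        (n.choose k : ℝ) * (-1) ^ k * (factorial (a + k) : ℝ) / (factorial (b + k) : ℝ)
      = (-1) ^ n * (Δ_[1])^[n] (fun k : ℕ => ((a + k)! : ℝ) / (b + k)!) 0 := by
        simp_rw [mul_div_assoc]
        exact sum_choose_mul_neg_one_pow_mul_eq_fwdDiff_iter _ n
    _ = (-1) ^ n * ((a - b).descFactorial n * ((a ! : ℝ) / (b + n)!)) := by
        rw [fwdDiff_iter_factorial_div_factorial, ← Nat.cast_sub hba,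
          descPochhammer_eval_eq_descFactorial]
        simp
    _ = _ := by
        rw [cast_descFactorial_eq_ite]
        split_ifs <;> ring
end

section
/- For any function F from finite tuples of positive integers to a commutative ring that is invariant under permutations of the index values (i.e., F(a_1,...,a_n) depends only on the partition of {1,...,n} induced by equalities among the a_i), the sum ∑_{m=1}^{n} ((-1)^{m-1}/m) ∑'_{1 ≤ a_1,...,a_n ≤ m} F(a_1,...,a_n), where the primed sum is over tuples with {a_1,...,a_n} = {1,...,m}, equals ∑_{1 ≤ a_1,...,a_n ≤ n} (-1)^{m(a)-1} (m(a)-1)! (n-m(a))! / n! · F(a_1,...,a_n), where m(a) = |{a_1,...,a_n}|. -/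
open Finset Nat

/-!
Split the unrestricted sum over `a : Fin n → {1, …, n}` according to the image `S` of `a`.
Since `F` only sees the equality pattern of its argument, relabelling `S` bijectively onto
`{1, …, |S|}` shows that the sum of `F` over the tuples with image exactly `S` depends only on
`m = |S|`: it is the primed sum `T m`. There are `n.choose m` such `S`, and
`n.choose m * (m - 1)! * (n - m)! / n! = 1 / m`; the term `m = 0` vanishes because `n ≥ 1`.
-/

section TuplesOnto

variable {ι α M : Type*} [Fintype ι] [DecidableEq ι] [DecidableEq α] [AddCommMonoid M]

def tuplesOnto (S : Finset α) : Finset (ι → α) :=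
  (Fintype.piFinset fun _ => S).filter fun a => univ.image a = S

theorem mem_tuplesOnto {S : Finset α} {a : ι → α} : a ∈ tuplesOnto S ↔ univ.image a = S := by
  refine ⟨fun h => (mem_filter.mp h).2, fun h => mem_filter.mpr ⟨?_, h⟩⟩
  exact Fintype.mem_piFinset.mpr fun i => h ▸ mem_image_of_mem a (mem_univ i)

theorem apply_mem_of_mem_tuplesOnto {S : Finset α} {a : ι → α} (ha : a ∈ tuplesOnto S) (i : ι) :
    a i ∈ S :=
  mem_tuplesOnto.mp ha ▸ mem_image_of_mem a (mem_univ i)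

theorem filter_piFinset_image_eq {S T : Finset α} (hST : S ⊆ T) :
    (Fintype.piFinset fun _ : ι => T).filter (fun a => univ.image a = S) = tuplesOnto S := by
  ext a
  rw [mem_tuplesOnto, mem_filter, Fintype.mem_piFinset, and_iff_right_iff_imp]
  rintro rfl i
  exact hST (mem_image_of_mem a (mem_univ i))

theorem sum_piFinset_eq_sum_powerset_sum_tuplesOnto (T : Finset α) (f : (ι → α) → M) :
    ∑ a ∈ Fintype.piFinset (fun _ => T), f a = ∑ S ∈ T.powerset, ∑ a ∈ tuplesOnto S, f a := by
  rw [← sum_fiberwise_of_maps_to (t := T.powerset) (g := fun a => univ.image a)]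
  · refine sum_congr rfl fun S hS => ?_
    rw [filter_piFinset_image_eq (mem_powerset.mp hS)]
  · intro a ha
    exact mem_powerset.mpr (image_subset_iff.mpr fun i _ => Fintype.mem_piFinset.mp ha i)

theorem tuplesOnto_empty [Nonempty ι] : tuplesOnto (ι := ι) (∅ : Finset α) = ∅ := by
  simp [tuplesOnto]

theorem Set.BijOn.comp_mem_tuplesOnto {β : Type*} [DecidableEq β] {S : Finset α} {S' : Finset β}
    {f : α → β} (hf : Set.BijOn f S S')
    {a : ι → α} (ha : a ∈ tuplesOnto S) : f ∘ a ∈ tuplesOnto S' := by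
  rw [mem_tuplesOnto, ← Finset.image_image, mem_tuplesOnto.mp ha, ← coe_inj, coe_image]
  exact hf.image_eq

variable (F : (ι → α) → M)

theorem sum_tuplesOnto_eq_of_bijOn [Nonempty α]
    (hF : ∀ a b : ι → α, (∀ i j, a i = a j ↔ b i = b j) → F a = F b) {S S' : Finset α}
    {f : α → α} (hf : Set.BijOn f S S') : ∑ a ∈ tuplesOnto S, F a = ∑ a ∈ tuplesOnto S', F a := by
  have hinv := hf.invOn_invFunOn
  refine sum_nbij' (f ∘ ·) (Function.invFunOn f S ∘ ·) (fun a ha => hf.comp_mem_tuplesOnto ha)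
    (fun b hb => (hf.symm hinv.symm).comp_mem_tuplesOnto hb) (fun a ha => ?_) (fun b hb => ?_)
    (fun a ha => ?_)
  · exact funext fun i => hinv.1 (apply_mem_of_mem_tuplesOnto ha i)
  · exact funext fun i => hinv.2 (apply_mem_of_mem_tuplesOnto hb i)
  · refine hF _ _ fun i j => (hf.injOn.eq_iff ?_ ?_).symm <;> exact apply_mem_of_mem_tuplesOnto ha _

theorem sum_tuplesOnto_eq_of_card_eq [Nonempty α]
    (hF : ∀ a b : ι → α, (∀ i j, a i = a j ↔ b i = b j) → F a = F b) {S S' : Finset α}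
    (h : S.card = S'.card) :
    ∑ a ∈ tuplesOnto S, F a = ∑ a ∈ tuplesOnto S', F a := by
  obtain ⟨f, hf⟩ := S.finite_toSet.exists_bijOn_of_encard_eq (t := (S' : Set α))
    (by rw [Set.encard_coe_eq_coe_finsetCard, Set.encard_coe_eq_coe_finsetCard, h])
  exact sum_tuplesOnto_eq_of_bijOn F hF hf

end TuplesOnto

theorem choose_mul_factorial_div_factorial {K : Type*} [Field K] [CharZero K] {n m : ℕ}
    (hm : 1 ≤ m) (hmn : m ≤ n) (c : K) :
    (n.choose m : K) * (c * (m - 1)! * (n - m)! / n !) = c / m := by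
  have hfact : ((n.choose m * (m * (m - 1)!) * (n - m)! : ℕ) : K) = n ! := by
    rw [Nat.mul_factorial_pred (by omega : m ≠ 0), choose_mul_factorial_mul_factorial hmn]
  push_cast at hfact
  rw [← mul_div_assoc, div_eq_div_iff (Nat.cast_ne_zero.mpr n.factorial_ne_zero)
    (Nat.cast_ne_zero.mpr (by omega : m ≠ 0))]
  linear_combination c * hfact

/-- Combinatorial re-summation of restricted (surjective-image) replica sums into a
single unrestricted sum with an `m`-dependent weight.  `F` is a function of tuples of
positive integers that depends only on the partition induced by equalities among the
entries (invariance under relabelling). -/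
theorem replica_resummation (n : ℕ) (hn : 1 ≤ n) (F : (Fin n → ℕ) → ℝ)
    (hF : ∀ a b : Fin n → ℕ, (∀ i j, a i = a j ↔ b i = b j) → F a = F b) :
    ∑ m ∈ Icc 1 n, ((-1 : ℝ) ^ (m - 1) / m) *
      ∑ a ∈ (Fintype.piFinset fun _ : Fin n => Icc 1 m).filter
        (fun a => Finset.image a Finset.univ = Icc 1 m), F a
    = ∑ a ∈ Fintype.piFinset (fun _ : Fin n => Icc 1 n),
        ((-1 : ℝ) ^ ((Finset.image a Finset.univ).card - 1) *
          (factorial ((Finset.image a Finset.univ).card - 1) : ℝ) *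
          (factorial (n - (Finset.image a Finset.univ).card) : ℝ) /
          (factorial n : ℝ)) * F a := by
  have : Nonempty (Fin n) := ⟨⟨0, hn⟩⟩
  set w : ℕ → ℝ := fun m => (-1 : ℝ) ^ (m - 1) * (m - 1)! * (n - m)! / (n ! : ℝ)
  set T : ℕ → ℝ := fun m => ∑ a ∈ tuplesOnto (Icc 1 m), F a
  have hT0 : T 0 = 0 := by simp [T, tuplesOnto_empty]
  calc _ = ∑ m ∈ range (n + 1), n.choose m • (w m * T m) := by
        rw [range_succ_eq_Icc_zero, ← insert_Icc_add_one_left_eq_Icc n.zero_le,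
          sum_insert (by simp), hT0, mul_zero, smul_zero, zero_add]
        refine sum_congr rfl fun m hm => ?_
        obtain ⟨hm1, hmn⟩ := mem_Icc.mp hm
        rw [nsmul_eq_mul, ← mul_assoc, choose_mul_factorial_div_factorial hm1 hmn]
        rfl
    _ = ∑ S ∈ (Icc 1 n).powerset, w S.card * T S.card := by
        rw [sum_powerset_apply_card (fun m => w m * T m), Nat.card_Icc, Nat.add_sub_cancel]
    _ = _ := by
        rw [sum_piFinset_eq_sum_powerset_sum_tuplesOnto]
        refine sum_congr rfl fun S _ => ?_
        change w S.card * ∑ a ∈ tuplesOnto (Icc 1 S.card), F a = _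
        rw [sum_tuplesOnto_eq_of_card_eq F hF (by rw [Nat.card_Icc, Nat.add_sub_cancel] :
          (Icc 1 S.card).card = S.card), mul_sum]
        exact sum_congr rfl fun a ha => by rw [mem_tuplesOnto.mp ha]
end

section
/- Let q : Σ × Σ → [-1,1] be symmetric with q(τ,τ) = 1, let ⟨·⟩ denote a quenched replicated expectation symmetric under permutations of replicas, and define for n ≥ 1: E_n = (1/(2^n (2n)! n!)) ∑_{1 ≤ a_1,...,a_{2n} ≤ 2n} (-1)^m (m-1)!(2n-m)! ⟨q²_{a_1a_2}···q²_{a_{2n-1}a_{2n}}⟩ where m = |{a_1,...,a_{2n}}|. Then for n ≥ 2, the summands where a_{2j-1} = a_{2j} for some j contribute zero in total, so the sum may be restricted to tuples with a_1 ≠ a_2, a_3 ≠ a_4, ..., a_{2n-1} ≠ a_{2n}. -/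
/-!
If pair `j` of a tuple `a` is diagonal, `q (τ b) (τ b) ^ 2 = 1` makes the observable independent
of the common value `b` of that pair, so summing over `b` only sums the weight
`w m = (-1) ^ m (m - 1)! (2n - m)!` over `m = #(insert b s)`, where `s` is the set of values of
the other pairs. Since `n ≥ 2` we have `1 ≤ #s < 2n`, and the `#s` values `b ∈ s` together with
the `2n - #s` values `b ∉ s` contribute `#s * w #s + (2n - #s) * w (#s + 1) = 0`.
The tuples with some diagonal pair are then split, by induction on the set of pairs allowed
to be diagonal, into classes that are closed under changing one distinguished diagonal pair.
-/

open Finset Nat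

namespace ReplicaPairing

section SetPair

variable {ι α : Type*} [DecidableEq ι]

def setPair (j : ι) (b : α) (a : ι × Fin 2 → α) : ι × Fin 2 → α :=
  fun p => if p.1 = j then b else a p

variable {j : ι} {b b' : α} {a : ι × Fin 2 → α}

@[simp]
lemma setPair_apply_self (k : Fin 2) : setPair j b a (j, k) = b := by simp [setPair]

lemma setPair_apply_of_ne {p : ι × Fin 2} (h : p.1 ≠ j) : setPair j b a p = a p := by
  simp [setPair, h]

@[simp]
lemma setPair_setPair : setPair j b (setPair j b' a) = setPair j b a := by
  ext p; by_cases h : p.1 = j <;> simp [setPair, h]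

lemma setPair_eq_self (h : a (j, 0) = a (j, 1)) : setPair j (a (j, 0)) a = a := by
  ext ⟨i, k⟩
  by_cases hi : i = j
  · subst hi; fin_cases k <;> simp [h]
  · exact setPair_apply_of_ne hi

lemma image_setPair [Fintype ι] [DecidableEq α] :
    univ.image (setPair j b a)
      = insert b ((univ.filter fun p : ι × Fin 2 => p.1 ≠ j).image a) := by
  ext x
  simp only [mem_image, mem_insert, mem_univ, true_and, mem_filter]
  constructor
  · rintro ⟨p, rfl⟩
    by_cases h : p.1 = j
    · simp [setPair, h]
    · exact .inr ⟨p, h, (setPair_apply_of_ne h).symm⟩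
  · rintro (rfl | ⟨p, h, rfl⟩)
    · exact ⟨(j, 0), setPair_apply_self 0⟩
    · exact ⟨p, setPair_apply_of_ne h⟩

lemma prod_setPair [Fintype ι] {M : Type*} [CommMonoid M] (g : α → α → M)
    (hg : ∀ x, g x x = 1) :
    ∏ i, g (setPair j b a (i, 0)) (setPair j b a (i, 1))
      = ∏ i ∈ univ.erase j, g (a (i, 0)) (a (i, 1)) := by
  rw [← mul_prod_erase univ _ (mem_univ j), setPair_apply_self, setPair_apply_self, hg, one_mul]
  refine prod_congr rfl fun i hi => ?_
  have hij : i ≠ j := ne_of_mem_erase hi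
  rw [setPair_apply_of_ne (p := (i, 0)) hij, setPair_apply_of_ne (p := (i, 1)) hij]

lemma sum_eq_zero_of_forall_sum_setPair_eq_zero [Fintype α] {M : Type*} [AddCommMonoid M]
    {s : Finset (ι × Fin 2 → α)} (j : ι) (hs : ∀ a ∈ s, ∀ b, setPair j b a ∈ s)
    (hdiag : ∀ a ∈ s, a (j, 0) = a (j, 1)) (f : (ι × Fin 2 → α) → M)
    (hf : ∀ a ∈ s, ∑ b, f (setPair j b a) = 0) :
    ∑ a ∈ s, f a = 0 := by
  classical
  obtain rfl | ⟨a₀, -⟩ := s.eq_empty_or_nonempty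
  · exact sum_empty
  set z := a₀ (j, 0)
  -- `a ↦ (a with pair j reset to z, common value of pair j)` is a bijection onto the product
  calc ∑ a ∈ s, f a = ∑ p ∈ s.image (setPair j z) ×ˢ univ, f (setPair j p.2 p.1) :=
        sum_nbij' (fun a => (setPair j z a, a (j, 0))) (fun p => setPair j p.2 p.1)
          (fun a ha => mem_product.2 ⟨mem_image_of_mem _ ha, mem_univ _⟩)
          (fun p hp => by
            obtain ⟨c, hc, hpc⟩ := mem_image.1 (mem_product.1 hp).1
            rw [← hpc, setPair_setPair]
            exact hs c hc _)
          (fun a ha => by simp only [setPair_setPair, setPair_eq_self (hdiag a ha)])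
          (fun ⟨c', b⟩ hp => by
            obtain ⟨c, -, rfl⟩ := mem_image.1 (mem_product.1 hp).1
            simp)
          (fun a ha => by simp only [setPair_setPair, setPair_eq_self (hdiag a ha)])
    _ = 0 := by
      rw [sum_product]
      refine sum_eq_zero fun c' hc' => ?_
      obtain ⟨c, hc, rfl⟩ := mem_image.1 hc'
      simpa using hf c hc

lemma sum_filter_exists_mem_diag_eq_zero [Fintype ι] [Fintype α] [DecidableEq α] {M : Type*}
    [AddCommMonoid M] (f : (ι × Fin 2 → α) → M) (hf : ∀ j a, ∑ b, f (setPair j b a) = 0)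
    (T : Finset ι) :
    ∑ a with ∃ j ∈ T, a (j, 0) = a (j, 1), f a = 0 := by
  induction T using Finset.induction_on with
  | empty => simp
  | insert j T hjT ih =>
    rw [← sum_filter_add_sum_filter_not _ fun a => ∃ i ∈ T, a (i, 0) = a (i, 1),
      filter_filter, filter_filter]
    have hfirst : ∀ a : ι × Fin 2 → α,
        ((∃ i ∈ insert j T, a (i, 0) = a (i, 1)) ∧ ∃ i ∈ T, a (i, 0) = a (i, 1))
          ↔ ∃ i ∈ T, a (i, 0) = a (i, 1) := fun a =>
      and_iff_right_of_imp fun ⟨i, hi, h⟩ => ⟨i, mem_insert_of_mem hi, h⟩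
    have hsecond : ∀ a : ι × Fin 2 → α,
        ((∃ i ∈ insert j T, a (i, 0) = a (i, 1)) ∧ ¬∃ i ∈ T, a (i, 0) = a (i, 1))
          ↔ a (j, 0) = a (j, 1) ∧ ¬∃ i ∈ T, a (i, 0) = a (i, 1) := fun a => by
      simp only [exists_mem_insert, or_and_right, and_not_self, or_false]
    rw [filter_congr fun a _ => hfirst a, ih, filter_congr fun a _ => hsecond a, zero_add]
    refine sum_eq_zero_of_forall_sum_setPair_eq_zero j (fun a ha b => ?_)
      (fun a ha => (mem_filter.1 ha).2.1) f fun a _ => hf j a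
    have hT : ∀ i ∈ T, setPair j b a (i, 0) = a (i, 0) ∧ setPair j b a (i, 1) = a (i, 1) :=
      fun i hi => have hij : i ≠ j := ne_of_mem_of_not_mem hi hjT
        ⟨setPair_apply_of_ne (p := (i, 0)) hij, setPair_apply_of_ne (p := (i, 1)) hij⟩
    simp only [mem_filter, mem_univ, true_and, setPair_apply_self] at ha ⊢
    exact fun ⟨i, hi, h⟩ => ha.2 ⟨i, hi, by rwa [(hT i hi).1, (hT i hi).2] at h⟩

end SetPair

def weight (N k : ℕ) : ℝ := (-1) ^ k * (k - 1)! * (N - k)!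

lemma mul_weight_add_mul_weight_succ {N k : ℕ} (hk : 1 ≤ k) (hkN : k < N) :
    k * weight N k + (N - k : ℕ) * weight N (k + 1) = 0 := by
  obtain ⟨k, rfl⟩ := Nat.exists_eq_add_of_le' hk
  obtain ⟨l, hl⟩ := Nat.exists_eq_add_of_lt hkN
  have hNk : N - (k + 1) = l + 1 := by omega
  have hNk' : N - (k + 1 + 1) = l := by omega
  simp only [weight, hNk, hNk', Nat.add_sub_cancel, factorial_succ]
  push_cast
  ring

lemma sum_weight_card_insert {α : Type*} [Fintype α] [DecidableEq α] {s : Finset α}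
    (hs : s.Nonempty) (hsα : s.card < Fintype.card α) :
    ∑ b, weight (Fintype.card α) (insert b s).card = 0 := by
  have hin : ∑ b ∈ s, weight (Fintype.card α) (insert b s).card
      = s.card * weight (Fintype.card α) s.card := by
    rw [sum_congr rfl fun b hb => by rw [insert_eq_of_mem hb], sum_const, nsmul_eq_mul]
  have hout : ∑ b ∈ sᶜ, weight (Fintype.card α) (insert b s).card
      = (Fintype.card α - s.card : ℕ) * weight (Fintype.card α) (s.card + 1) := by
    rw [sum_congr rfl fun b hb => by rw [card_insert_of_notMem (mem_compl.1 hb)], sum_const,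
      nsmul_eq_mul, card_compl]
  rw [← sum_add_sum_compl s, hin, hout]
  exact mul_weight_add_mul_weight_succ (card_pos.2 hs) hsα

lemma sum_setPair_weight_mul_eq_zero {n : ℕ} (hn : 2 ≤ n) {S : Type*} {q : S → S → ℝ}
    (hq1 : ∀ x, q x x = 1) (E : ((Fin (2 * n) → S) → ℝ) → ℝ) (j : Fin n)
    (a : Fin n × Fin 2 → Fin (2 * n)) :
    ∑ b, weight (2 * n) (univ.image (setPair j b a)).card *
      E (fun τ => ∏ i, q (τ (setPair j b a (i, 0))) (τ (setPair j b a (i, 1))) ^ 2) = 0 := by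
  have hobs : ∀ b, (fun τ : Fin (2 * n) → S =>
      ∏ i, q (τ (setPair j b a (i, 0))) (τ (setPair j b a (i, 1))) ^ 2)
      = fun τ => ∏ i ∈ univ.erase j, q (τ (a (i, 0))) (τ (a (i, 1))) ^ 2 := fun b =>
    funext fun τ => prod_setPair (fun x y => q (τ x) (τ y) ^ 2) fun x => by simp [hq1]
  simp only [hobs, image_setPair, ← sum_mul]
  set s := (univ.filter fun p : Fin n × Fin 2 => p.1 ≠ j).image a
  have hs : s.Nonempty := by
    have : Nontrivial (Fin n) := Fin.nontrivial_iff_two_le.2 hn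
    obtain ⟨i, hi⟩ := exists_ne j
    exact ⟨a (i, 0), mem_image_of_mem a (by simpa using hi)⟩
  have hsα : s.card < Fintype.card (Fin (2 * n)) := calc
    s.card ≤ (univ.filter fun p : Fin n × Fin 2 => p.1 ≠ j).card := card_image_le
    _ < (univ : Finset (Fin n × Fin 2)).card :=
      card_lt_card (filter_ssubset.2 ⟨(j, 0), mem_univ _, by simp⟩)
    _ = Fintype.card (Fin (2 * n)) := by simp [mul_comm]
  have := sum_weight_card_insert hs hsα
  rw [Fintype.card_fin] at this
  rw [this, zero_mul]

end ReplicaPairing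

theorem restrict_to_offdiagonal_pairs_general (n : ℕ) (hn : 2 ≤ n) (S : Type*)
    (q : S → S → ℝ) (hq1 : ∀ x, q x x = 1)
    (E : ((Fin (2 * n) → S) → ℝ) → ℝ) :
    ∑ a : Fin n × Fin 2 → Fin (2 * n),
      ((-1 : ℝ) ^ (Finset.image a Finset.univ).card *
        (factorial ((Finset.image a Finset.univ).card - 1) : ℝ) *
        (factorial (2 * n - (Finset.image a Finset.univ).card) : ℝ)) *
        E (fun τ => ∏ j : Fin n, (q (τ (a (j, 0))) (τ (a (j, 1)))) ^ 2)
    = ∑ a ∈ (Finset.univ : Finset (Fin n × Fin 2 → Fin (2 * n))).filter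
        (fun a => ∀ j : Fin n, a (j, 0) ≠ a (j, 1)),
      ((-1 : ℝ) ^ (Finset.image a Finset.univ).card *
        (factorial ((Finset.image a Finset.univ).card - 1) : ℝ) *
        (factorial (2 * n - (Finset.image a Finset.univ).card) : ℝ)) *
        E (fun τ => ∏ j : Fin n, (q (τ (a (j, 0))) (τ (a (j, 1)))) ^ 2) := by
  have hdiag := ReplicaPairing.sum_filter_exists_mem_diag_eq_zero
    (fun a => ReplicaPairing.weight (2 * n) (univ.image a).card *
      E fun τ => ∏ j : Fin n, q (τ (a (j, 0))) (τ (a (j, 1))) ^ 2)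
    (ReplicaPairing.sum_setPair_weight_mul_eq_zero hn hq1 E) univ
  simp only [mem_univ, true_and] at hdiag
  rw [← sum_filter_add_sum_filter_not univ fun a => ∀ j : Fin n, a (j, 0) ≠ a (j, 1)]
  simp only [not_forall, not_not]
  exact add_eq_left.2 hdiag

/-- In the SK energy expansion coefficient
`E_n = (1/(2^n (2n)! n!)) ∑_a (-1)^m (m-1)!(2n-m)! ⟨q²_{a₁a₂}⋯q²_{a_{2n-1}a_{2n}}⟩`
(with `m` the number of distinct replica indices), for `n ≥ 2` the summands with a
repeated index inside some pair contribute zero in total, so the sum may be restricted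
to tuples with `a₁ ≠ a₂, a₃ ≠ a₄, …`.  Here `⟨·⟩ = E` is a replica-permutation
invariant expectation and `q` a symmetric overlap kernel with `q(τ,τ) = 1`. -/
theorem restrict_to_offdiagonal_pairs (n : ℕ) (hn : 2 ≤ n) (S : Type*)
    (q : S → S → ℝ) (hqsymm : ∀ x y, q x y = q y x) (hq1 : ∀ x, q x x = 1)
    (E : ((Fin (2 * n) → S) → ℝ) → ℝ)
    (hE : ∀ (π : Equiv.Perm (Fin (2 * n))) (f : (Fin (2 * n) → S) → ℝ),
      E (fun τ => f (τ ∘ π)) = E f) :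
    ∑ a : Fin n × Fin 2 → Fin (2 * n),
      ((-1 : ℝ) ^ (Finset.image a Finset.univ).card *
        (factorial ((Finset.image a Finset.univ).card - 1) : ℝ) *
        (factorial (2 * n - (Finset.image a Finset.univ).card) : ℝ)) *
        E (fun τ => ∏ j : Fin n, (q (τ (a (j, 0))) (τ (a (j, 1)))) ^ 2)
    = ∑ a ∈ (Finset.univ : Finset (Fin n × Fin 2 → Fin (2 * n))).filter
        (fun a => ∀ j : Fin n, a (j, 0) ≠ a (j, 1)),
      ((-1 : ℝ) ^ (Finset.image a Finset.univ).card *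
        (factorial ((Finset.image a Finset.univ).card - 1) : ℝ) *
        (factorial (2 * n - (Finset.image a Finset.univ).card) : ℝ)) *
        E (fun τ => ∏ j : Fin n, (q (τ (a (j, 0))) (τ (a (j, 1)))) ^ 2) :=
  restrict_to_offdiagonal_pairs_general n hn S q hq1 E
end

section
/- With A_s = ∑_{1≤a<b≤s} q²_{ab} − s ∑_{1≤a≤s} q²_{a,s+1} + (s(s+1)/2) q²_{s+1,s+2}, and for fixed replica indices a_1,...,a_{2(n-1)} all lying in {1,...,s}, the sum ∑_{1≤a<b≤2n} (-1)^m (m-1)!(2n-m)! Q q²_{ab}, where Q = q²_{a_1a_2}···q²_{a_{2n-3}a_{2n-2}} and m = |{a_1,...,a_{2n-2},a,b}|, equals (-1)^s (s-1)!(2n-s)! Q A_s, assuming the quenched expectation ⟨·⟩ is permutation-symmetric in replicas with indices > s and Q depends only on replicas 1,...,s. -/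
open Finset Nat

/-!
Write `F c d = ⟨Q q²_{cd}⟩` and `w m = (-1)^m (m-1)! (2n-m)!`. Since `Q` only involves the
replicas `1, …, s`, permutation invariance makes `F c d` depend only on how many of `c < d`
exceed `s`: the pairs with `c ≤ s < d` all contribute `w (s+1) F c (s+1)`, and the
`(2n-s).choose 2` pairs with `s < c < d` all contribute `w (s+2) F (s+1) (s+2)`. The factorial
identities `(2n-s) w (s+1) = -s w s` and `(2n-s).choose 2 · w (s+2) = s(s+1)/2 · w s` then
factor out `w s`, and linearity of `⟨·⟩` recombines what is left into `⟨Q A_s⟩`.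
-/

theorem Finset.card_union_pair_of_mem {α : Type*} [DecidableEq α] {B : Finset α} {c d : α}
    (hc : c ∈ B) (hd : d ∈ B) : #(B ∪ {c, d}) = #B := by
  rw [union_insert, union_singleton, insert_eq_of_mem (mem_insert_of_mem hc),
    insert_eq_of_mem hd]

theorem Finset.card_union_pair_of_mem_of_notMem {α : Type*} [DecidableEq α] {B : Finset α}
    {c d : α} (hc : c ∈ B) (hd : d ∉ B) : #(B ∪ {c, d}) = #B + 1 := by
  rw [union_insert, union_singleton, insert_eq_of_mem (mem_insert_of_mem hc),
    card_insert_of_notMem hd]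

theorem Finset.card_union_pair_of_notMem {α : Type*} [DecidableEq α] {B : Finset α} {c d : α}
    (hc : c ∉ B) (hd : d ∉ B) (hcd : c ≠ d) : #(B ∪ {c, d}) = #B + 2 := by
  rw [union_insert, union_singleton, card_insert_of_notMem (by simp [hcd, hc]),
    card_insert_of_notMem hd]

theorem Finset.sum_Icc_pairs_split {M : Type*} [AddCommMonoid M] (g : ℕ → ℕ → M) {s N : ℕ}
    (hsN : s ≤ N) :
    ∑ c ∈ Icc 1 N, ∑ d ∈ Icc (c + 1) N, g c d =
      ∑ c ∈ Icc 1 s, ∑ d ∈ Icc (c + 1) s, g c d + ∑ c ∈ Icc 1 s, ∑ d ∈ Icc (s + 1) N, g c d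
        + ∑ c ∈ Icc (s + 1) N, ∑ d ∈ Icc (c + 1) N, g c d := by
  have hIcc : ∀ k, Icc 1 k = Ioc 0 k := fun _ => rfl
  simp only [hIcc, Icc_add_one_left_eq_Ioc]
  rw [← sum_Ioc_consecutive _ (Nat.zero_le s) hsN, ← sum_add_distrib]
  congr 1
  refine sum_congr rfl fun c hc => ?_
  exact (sum_Ioc_consecutive _ (mem_Ioc.mp hc).2 hsN).symm

theorem Finset.sum_Icc_sub_eq_choose_two (s N : ℕ) :
    ∑ c ∈ Icc (s + 1) N, (N - c) = (N - s).choose 2 := by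
  rw [Nat.choose_two_right, ← sum_range_id]
  refine sum_nbij' (fun c => N - c) (fun k => N - k) ?_ ?_ ?_ ?_ ?_ <;>
    intro x hx <;> simp only [mem_Icc, mem_range] at hx ⊢ <;> omega

def PairSymmetricAbove {α : Type*} (s : ℕ) (F : ℕ → ℕ → α) : Prop :=
  ∀ π : Equiv.Perm ℕ, (∀ i ≤ s, π i = i) → ∀ c d, F (π c) (π d) = F c d

namespace PairSymmetricAbove

variable {α : Type*} {s : ℕ} {F : ℕ → ℕ → α}

theorem apply_of_le_of_lt (hF : PairSymmetricAbove s F) {c d : ℕ} (hc : c ≤ s) (hd : s < d) :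
    F c d = F c (s + 1) := by
  have hfix : ∀ i ≤ s, Equiv.swap (s + 1) d i = i := fun i hi =>
    Equiv.swap_apply_of_ne_of_ne (by omega) (by omega)
  simpa [hfix c hc] using hF _ hfix c (s + 1)

theorem apply_of_lt_of_lt (hF : PairSymmetricAbove s F) {c d : ℕ} (hc : s < c) (hcd : c < d) :
    F c d = F (s + 1) (s + 2) := by
  set π := (Equiv.swap (s + 2) d).trans (Equiv.swap (s + 1) c)
  have hfix : ∀ i ≤ s, π i = i := fun i hi => by
    simp [π, Equiv.swap_apply_of_ne_of_ne (show i ≠ s + 2 by omega) (show i ≠ d by omega),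
      Equiv.swap_apply_of_ne_of_ne (show i ≠ s + 1 by omega) (show i ≠ c by omega)]
  have h1 : π (s + 1) = c := by
    simp [π, Equiv.swap_apply_of_ne_of_ne (show s + 1 ≠ s + 2 by omega) (show s + 1 ≠ d by omega)]
  have h2 : π (s + 2) = d := by
    simp [π, Equiv.swap_apply_of_ne_of_ne (show d ≠ s + 1 by omega) (show d ≠ c by omega)]
  simpa [h1, h2] using hF π hfix (s + 1) (s + 2)

end PairSymmetricAbove

theorem sum_pairs_weight_card_union {R : Type*} [CommSemiring R] {F : ℕ → ℕ → R} {s N : ℕ}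
    (hF : PairSymmetricAbove s F) (w : ℕ → R) (hsN : s ≤ N) :
    ∑ c ∈ Icc 1 N, ∑ d ∈ Icc (c + 1) N, w #(Icc 1 s ∪ {c, d}) * F c d =
      w s * ∑ c ∈ Icc 1 s, ∑ d ∈ Icc (c + 1) s, F c d
        + (N - s : ℕ) * w (s + 1) * ∑ c ∈ Icc 1 s, F c (s + 1)
        + (N - s).choose 2 * w (s + 2) * F (s + 1) (s + 2) := by
  have hcard : #(Icc 1 s) = s := by simp
  have hlow : ∀ c ∈ Icc 1 s, ∀ d ∈ Icc (c + 1) s,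
      w #(Icc 1 s ∪ {c, d}) * F c d = w s * F c d := by
    intro c hc d hd
    simp only [mem_Icc] at hc hd
    rw [card_union_pair_of_mem (by simp; omega) (by simp; omega), hcard]
  have hmixed : ∀ c ∈ Icc 1 s, ∀ d ∈ Icc (s + 1) N,
      w #(Icc 1 s ∪ {c, d}) * F c d = w (s + 1) * F c (s + 1) := by
    intro c hc d hd
    simp only [mem_Icc] at hc hd
    rw [card_union_pair_of_mem_of_notMem (by simp; omega) (by simp; omega), hcard,
      hF.apply_of_le_of_lt hc.2 (by omega)]
  have hhigh : ∀ c ∈ Icc (s + 1) N, ∀ d ∈ Icc (c + 1) N,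
      w #(Icc 1 s ∪ {c, d}) * F c d = w (s + 2) * F (s + 1) (s + 2) := by
    intro c hc d hd
    simp only [mem_Icc] at hc hd
    rw [card_union_pair_of_notMem (by simp; omega) (by simp; omega) (by omega), hcard,
      hF.apply_of_lt_of_lt (by omega) (by omega)]
  rw [sum_Icc_pairs_split _ hsN, sum_congr rfl fun c hc => sum_congr rfl (hlow c hc),
    sum_congr rfl fun c hc => sum_congr rfl (hmixed c hc),
    sum_congr rfl fun c hc => sum_congr rfl (hhigh c hc)]
  simp only [sum_const, Nat.card_Icc, Nat.add_sub_add_right, nsmul_eq_mul, ← mul_sum, ← sum_mul,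
    ← Nat.cast_sum, sum_Icc_sub_eq_choose_two]
  ring

def acWeight (N m : ℕ) : ℝ := (-1) ^ m * (m - 1)! * (N - m)!

theorem natCast_sub_mul_acWeight_succ {N s : ℕ} (hs : s ≠ 0) (hsN : s < N) :
    ((N - s : ℕ) : ℝ) * acWeight N (s + 1) = -(s * acWeight N s) := by
  rw [acWeight, acWeight, show N - s = N - (s + 1) + 1 by omega, Nat.add_sub_cancel,
    ← Nat.mul_factorial_pred hs, Nat.factorial_succ]
  push_cast
  ring

theorem choose_two_mul_acWeight_add_two {N s : ℕ} (hs : s ≠ 0) (hsN : s + 2 ≤ N) :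
    ((N - s).choose 2 : ℝ) * acWeight N (s + 2) = s * (s + 1) / 2 * acWeight N s := by
  have h1 := natCast_sub_mul_acWeight_succ hs (by omega : s < N)
  have h2 := natCast_sub_mul_acWeight_succ s.succ_ne_zero (by omega : s + 1 < N)
  have hcast : ((N - (s + 1) : ℕ) : ℝ) = ((N - s : ℕ) : ℝ) - 1 := by
    rw [show N - s = N - (s + 1) + 1 by omega]; push_cast; ring
  rw [hcast] at h2
  rw [Nat.cast_choose_two]
  push_cast at h2
  linear_combination ((N - s : ℕ) : ℝ) / 2 * h2 - ((s : ℝ) + 1) / 2 * h1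

namespace LinearMap

variable {X R M : Type*} [CommRing R] [AddCommGroup M] [Module R M] (E : (X → R) →ₗ[R] M)
  (Q : X → R)

theorem map_mul_sum_fun {ι : Type*} (A : Finset ι) (f : ι → X → R) :
    E (fun x => Q x * ∑ i ∈ A, f i x) = ∑ i ∈ A, E (fun x => Q x * f i x) := by
  simp only [mul_sum]
  rw [← sum_fn]
  exact map_sum E _ A

theorem map_mul_sub_add_fun (f g h : X → R) (u v : R) :
    E (fun x => Q x * (f x - u * g x + v * h x)) =
      E (fun x => Q x * f x) - u • E (fun x => Q x * g x) + v • E (fun x => Q x * h x) := by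
  have hfun : (fun x => Q x * (f x - u * g x + v * h x)) =
      (fun x => Q x * f x) - u • (fun x => Q x * g x) + v • (fun x => Q x * h x) := by
    ext x; simp only [Pi.add_apply, Pi.sub_apply, Pi.smul_apply, smul_eq_mul]; ring
  rw [hfun, map_add, map_sub, map_smul, map_smul]

end LinearMap

theorem AC_factor_collapse_general (n s : ℕ) (hs : 2 ≤ s)
    (hsn : s + 2 ≤ 2 * n) (S : Type*) (q : S → S → ℝ)
    (E : ((ℕ → S) → ℝ) →ₗ[ℝ] ℝ)
    (hE : ∀ (π : Equiv.Perm ℕ), (∀ i ≤ s, π i = i) →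
      ∀ f : (ℕ → S) → ℝ, E (fun τ => f (τ ∘ π)) = E f)
    (a : Fin (n - 1) × Fin 2 → ℕ)
    (ha : Finset.image a Finset.univ = Icc 1 s) :
    ∑ c ∈ Icc 1 (2 * n), ∑ d ∈ Icc (c + 1) (2 * n),
      ((-1 : ℝ) ^ (Finset.image a Finset.univ ∪ {c, d}).card *
        (factorial ((Finset.image a Finset.univ ∪ {c, d}).card - 1) : ℝ) *
        (factorial (2 * n - (Finset.image a Finset.univ ∪ {c, d}).card) : ℝ)) *
        E (fun τ =>
          (∏ j : Fin (n - 1), (q (τ (a (j, 0))) (τ (a (j, 1)))) ^ 2) *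
            (q (τ c) (τ d)) ^ 2)
    = (-1 : ℝ) ^ s * (factorial (s - 1) : ℝ) * (factorial (2 * n - s) : ℝ) *
        E (fun τ =>
          (∏ j : Fin (n - 1), (q (τ (a (j, 0))) (τ (a (j, 1)))) ^ 2) *
            ((∑ c ∈ Icc 1 s, ∑ d ∈ Icc (c + 1) s, (q (τ c) (τ d)) ^ 2)
              - (s : ℝ) * ∑ c ∈ Icc 1 s, (q (τ c) (τ (s + 1))) ^ 2
              + ((s : ℝ) * (s + 1) / 2) * (q (τ (s + 1)) (τ (s + 2))) ^ 2)) := by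
  set Q : (ℕ → S) → ℝ := fun τ => ∏ j : Fin (n - 1), q (τ (a (j, 0))) (τ (a (j, 1))) ^ 2
  set F : ℕ → ℕ → ℝ := fun c d => E (fun τ => Q τ * q (τ c) (τ d) ^ 2)
  have hF : PairSymmetricAbove s F := by
    intro π hπ c d
    have hQ : ∀ τ : ℕ → S, Q (τ ∘ π) = Q τ := fun τ => by
      refine prod_congr rfl fun j _ => ?_
      have hmem : ∀ i, a (j, i) ≤ s := fun i =>
        (mem_Icc.mp (ha ▸ mem_image_of_mem a (mem_univ (j, i)))).2
      simp only [Function.comp_apply, hπ _ (hmem 0), hπ _ (hmem 1)]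
    simpa only [F, Function.comp_apply, hQ] using
      hE π hπ (fun τ => Q τ * q (τ c) (τ d) ^ 2)
  rw [ha]
  refine (sum_pairs_weight_card_union (w := acWeight (2 * n)) hF (by omega)).trans ?_
  rw [natCast_sub_mul_acWeight_succ (by omega) (by omega),
    choose_two_mul_acWeight_add_two (by omega) hsn, LinearMap.map_mul_sub_add_fun]
  simp only [LinearMap.map_mul_sum_fun, smul_eq_mul, acWeight, F, Q]
  ring

/-- Collapse of the sum over an extra replica pair into the Aizenman–Contucci factor
`A_s = ∑_{1≤a<b≤s} q²_{ab} − s ∑_{1≤a≤s} q²_{a,s+1} + (s(s+1)/2) q²_{s+1,s+2}`: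
for fixed replica indices `a₁,…,a_{2(n-1)}` with value set exactly `{1,…,s}`,
`∑_{1≤a<b≤2n} (-1)^m (m-1)!(2n-m)! ⟨Q q²_{ab}⟩ = (-1)^s (s-1)!(2n-s)! ⟨Q A_s⟩`,
where `Q = q²_{a₁a₂}⋯q²_{a_{2n-3}a_{2n-2}}`, `m = |{a₁,…,a_{2n-2},a,b}|`, and the
expectation `E = ⟨·⟩` is linear and invariant under permutations of the replica
labels fixing `1,…,s`. -/
theorem AC_factor_collapse (n s : ℕ) (hn : 2 ≤ n) (hs : 2 ≤ s)
    (hsn : s + 2 ≤ 2 * n) (S : Type*) (q : S → S → ℝ)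
    (hqsymm : ∀ x y, q x y = q y x) (hq1 : ∀ x, q x x = 1)
    (E : ((ℕ → S) → ℝ) →ₗ[ℝ] ℝ)
    (hE : ∀ (π : Equiv.Perm ℕ), (∀ i ≤ s, π i = i) →
      ∀ f : (ℕ → S) → ℝ, E (fun τ => f (τ ∘ π)) = E f)
    (a : Fin (n - 1) × Fin 2 → ℕ)
    (ha : Finset.image a Finset.univ = Icc 1 s) :
    ∑ c ∈ Icc 1 (2 * n), ∑ d ∈ Icc (c + 1) (2 * n),
      ((-1 : ℝ) ^ (Finset.image a Finset.univ ∪ {c, d}).card *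
        (factorial ((Finset.image a Finset.univ ∪ {c, d}).card - 1) : ℝ) *
        (factorial (2 * n - (Finset.image a Finset.univ ∪ {c, d}).card) : ℝ)) *
        E (fun τ =>
          (∏ j : Fin (n - 1), (q (τ (a (j, 0))) (τ (a (j, 1)))) ^ 2) *
            (q (τ c) (τ d)) ^ 2)
    = (-1 : ℝ) ^ s * (factorial (s - 1) : ℝ) * (factorial (2 * n - s) : ℝ) *
        E (fun τ =>
          (∏ j : Fin (n - 1), (q (τ (a (j, 0))) (τ (a (j, 1)))) ^ 2) *
            ((∑ c ∈ Icc 1 s, ∑ d ∈ Icc (c + 1) s, (q (τ c) (τ d)) ^ 2)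
              - (s : ℝ) * ∑ c ∈ Icc 1 s, (q (τ c) (τ (s + 1))) ^ 2
              + ((s : ℝ) * (s + 1) / 2) * (q (τ (s + 1)) (τ (s + 2))) ^ 2)) :=
  AC_factor_collapse_general n s hs hsn S q E hE a ha
end

section
/- If the recursion E_{(k)} = E_{(...,k_p−1,...)} · B_{2n−2p}^{(2p)} holds (removing one part p from the partition (k) of n), then starting from E_{(1)} = (1/2)(q²_{12} − 1) one obtains E_{(n,0,...,0)} = E_{(1)} B_2^{(2)} B_4^{(2)} ··· B_{2n−2}^{(2)}, and since B_s^{(2)} = A_s^{(2)}, the coefficient E^{VB}_{nn} = (1/n!) E_{(n,0,...,0)} equals (1/(2·n!))(q²_{12} − 1) A_2^{(2)} A_4^{(2)} ··· A_{2n−2}^{(2)} = E^{SK}_n. -/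
open Finset Nat

/-- The multiplicity function of the all-ones partition of `n` (`n` parts equal to 1). -/
def onesPartition (n : ℕ) : ℕ → ℕ := fun r => if r = 1 then n else 0

theorem eq_mul_prod_Icc_of_succ_eq_mul {M : Type*} [CommMonoid M] {f b : ℕ → M}
    (h : ∀ m, 1 ≤ m → f (m + 1) = f m * b m) :
    ∀ n, 1 ≤ n → f n = f 1 * ∏ j ∈ Icc 1 (n - 1), b j := by
  refine Nat.le_induction (by simp) fun n hn ih => ?_
  obtain ⟨k, rfl⟩ : ∃ k, n = k + 1 := ⟨n - 1, by omega⟩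
  simp only [add_tsub_cancel_right] at ih ⊢
  rw [h _ hn, ih, prod_Icc_succ_top (by omega), mul_assoc]

theorem sum_mul_onesPartition (n : ℕ) : ∑ α ∈ Icc 1 n, α * onesPartition n α = n := by
  rw [sum_eq_single 1]
  · simp [onesPartition]
  · intro α _ hα
    simp [onesPartition, hα]
  · intro h1
    simp only [mem_Icc, le_refl, true_and, not_le, Nat.lt_one_iff] at h1
    simp [onesPartition, h1]

theorem update_onesPartition_succ (n : ℕ) :
    Function.update (onesPartition (n + 1)) 1 (onesPartition (n + 1) 1 - 1) = onesPartition n := by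
  funext r
  by_cases hr : r = 1 <;> simp [Function.update, onesPartition, hr]

/-- From the recursion `E_{(k)} = E_{(…,k_p−1,…)} · B_{2n−2p}^{(2p)}` (removing one
part `p` from a partition `(k)` of `n`) and the initial value
`E_{(1)} = (1/2)(q²₁₂ − 1)`, one obtains
`E_{(n,0,…,0)} = E_{(1)} B₂^{(2)} ⋯ B_{2n−2}^{(2)}`; since `B_s^{(2)} = A_s^{(2)}`,
the coefficient `E^{VB}_{nn} = (1/n!) E_{(n,0,…,0)}` equals
`(1/(2·n!))(q²₁₂ − 1) A₂^{(2)} ⋯ A_{2n−2}^{(2)} = E^{SK}_n`. -/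
theorem VB_diagonal_coefficients_equal_SK
    (E : (ℕ → ℕ) → ℝ) (B : ℕ → ℕ → ℝ) (A : ℕ → ℝ) (Q : ℝ)
    (hrec : ∀ (n p : ℕ) (k : ℕ → ℕ), 1 ≤ p → p ≤ n → 1 ≤ k p →
      (∑ α ∈ Icc 1 n, α * k α = n) →
      E k = E (Function.update k p (k p - 1)) * B (2 * n - 2 * p) (2 * p))
    (hB : ∀ s, B s 2 = A s)
    (hE1 : E (onesPartition 1) = (1 / 2) * (Q - 1)) :
    ∀ n, 1 ≤ n →
      E (onesPartition n) = E (onesPartition 1) * ∏ j ∈ Icc 1 (n - 1), B (2 * j) 2 ∧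
      (1 / (factorial n : ℝ)) * E (onesPartition n)
        = (1 / (2 * (factorial n : ℝ))) * (Q - 1) * ∏ j ∈ Icc 1 (n - 1), A (2 * j) := by
  have hstep : ∀ m, E (onesPartition (m + 1)) = E (onesPartition m) * B (2 * m) 2 := by
    intro m
    have h := hrec (m + 1) 1 (onesPartition (m + 1)) le_rfl (by omega)
      (by simp [onesPartition]) (sum_mul_onesPartition _)
    rwa [update_onesPartition_succ, show 2 * (m + 1) - 2 * 1 = 2 * m by omega] at h
  intro n hn
  have hE := eq_mul_prod_Icc_of_succ_eq_mul (f := fun m => E (onesPartition m))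
    (b := fun j => B (2 * j) 2) (fun m _ => hstep m) n hn
  refine ⟨hE, ?_⟩
  rw [hE, hE1, prod_congr rfl fun j _ => hB (2 * j)]
  ring
end
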